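/- Let G be an r-regular simple graph with n vertices and m edges, where r ≥ 2 (so that m ≥ n), and let q_1 ≤ q_2 ≤ … ≤ q_n = 2r be the eigenvalues of Q(G) listed with multiplicity. Then f(λ, G^{11-}) = [(λ-2n-2m+2)(λ-n-m+r+4) + 8m]·(λ-n-m+4)^{m-n}·∏_{i=1}^{n-1}[(λ-m-n+r+2)(λ-n-m+4) - q_i]. -/

import Mathlib

open Classical

/-- The four symbols `0, 1, +, -` used in `xyz`-transformations. -/
inductive XYZ : Type
  | zero | one | plus | minus

namespace XYZ

/-- The relation on the vertices of a graph `H` given by a symbol: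
`0` gives the empty graph, `1` the complete graph, `+` the graph itself,
`-` its complement. -/
def rel {W : Type*} (H : SimpleGraph W) : XYZ → W → W → Prop
  | .zero => fun _ _ => False
  | .one  => fun u v => u ≠ v
  | .plus => fun u v => H.Adj u v
  | .minus => fun u v => u ≠ v ∧ ¬ H.Adj u v

/-- The incidence relation between a vertex and an edge given by a symbol `z`:
`+` means incident, `-` means non-incident, `0` never, `1` always. -/
def inc {W : Type*} (G : SimpleGraph W) : XYZ → W → G.edgeSet → Prop
  | .zero => fun _ _ => False
  | .one  => fun _ _ => True
  | .plus => fun v e => v ∈ (e : Sym2 W)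
  | .minus => fun v e => v ∉ (e : Sym2 W)

theorem rel_symm {W : Type*} (H : SimpleGraph W) (x : XYZ) {u v : W}
    (h : rel H x u v) : rel H x v u := by
  cases x with
  | zero => exact h.elim
  | one => exact (h : u ≠ v).symm
  | plus => exact H.adj_symm h
  | minus => exact ⟨(h.1).symm, fun h' => h.2 (H.adj_symm h')⟩

theorem rel_irrefl {W : Type*} (H : SimpleGraph W) (x : XYZ) {u : W}
    (h : rel H x u u) : False := by
  cases x with
  | zero => exact h
  | one => exact h rfl
  | plus => exact H.irrefl h
  | minus => exact h.1 rfl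

end XYZ

/-- The `xyz`-transformation `G^{xyz}` of a graph `G`: its vertex set is
`V(G) ⊕ E(G)`; two vertices of `G` are adjacent according to the symbol `x`
(applied to `G`), two edges according to the symbol `y` (applied to the line
graph of `G`), and a vertex and an edge according to the symbol `z`
(`+` = incidence graph `B(G)`, `-` = non-incidence graph `B^c(G)`,
`0` = no vertex-edge edges, `1` = all vertex-edge edges). -/
def xyzTransform {V : Type*} (G : SimpleGraph V) (x y z : XYZ) :
    SimpleGraph (V ⊕ G.edgeSet) where
  Adj a b :=
    match a, b with
    | Sum.inl u, Sum.inl v => XYZ.rel G x u v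
    | Sum.inr e, Sum.inr f => XYZ.rel G.lineGraph y e f
    | Sum.inl v, Sum.inr e => XYZ.inc G z v e
    | Sum.inr e, Sum.inl v => XYZ.inc G z v e
  symm := by
    refine ⟨?_⟩
    rintro (u | e) (v | f) h
    · exact XYZ.rel_symm G x h
    · exact h
    · exact h
    · exact XYZ.rel_symm G.lineGraph y h
  loopless := by
    refine ⟨?_⟩
    rintro (u | e) h
    · exact XYZ.rel_irrefl G x h
    · exact XYZ.rel_irrefl G.lineGraph y h

/-- The signless Laplacian matrix `Q(G) = D(G) + A(G)` of a graph. -/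
noncomputable def signlessLaplacian {V : Type*} [Fintype V] (G : SimpleGraph V) :
    Matrix V V ℝ :=
  Matrix.of fun u v =>
    (if u = v then (G.degree u : ℝ) else 0) + (if G.Adj u v then 1 else 0)

/-- The signless Laplacian characteristic polynomial
`f(λ, G) = det (λ I - Q(G))`, evaluated at a real number `λ`. -/
noncomputable def fQ {V : Type*} [Fintype V] (G : SimpleGraph V) (lam : ℝ) : ℝ :=
  Matrix.det (lam • (1 : Matrix V V ℝ) - signlessLaplacian G)


/-! `G^{11-}` is the complement of the vertex–edge incidence graph `B(G)`, so `λI - Q(G^{11-})` is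
the block matrix `M = [[αI, B], [Bᵀ, βI]]` minus the all-ones matrix, where `B` is the incidence
matrix of `G`, `α = λ - n - m + r + 2` and `β = λ - n - m + 4`. As `B` has row sums `r` and column
sums `2`, `M` maps a vector that is constant on each block to the all-ones vector, so the matrix
determinant lemma turns `det (M - J)` into `det M` times a scalar. The Schur complement of `βI`
together with `B Bᵀ = Q(G)` gives `det M = β^(m-n) f(αβ, G)`, and the factor `αβ - 2r` of
`f(αβ, G)` belonging to the eigenvalue `2r` combines with that scalar into the quadratic factor.
This needs `β ≠ 0` and `αβ ≠ 2r`, true for `λ ≥ n + m`; both sides are polynomials in `λ`, so the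
identity holds for every `λ`. -/

open Matrix Polynomial

namespace Matrix

variable {ι κ : Type*} [Fintype ι] [DecidableEq ι]

theorem det_sub_vecMulVec_of_mulVec_eq {R : Type*} [CommRing R] {M : Matrix ι ι R}
    {u c : ι → R} (h : M *ᵥ u = c) (w : ι → R) :
    det (M - vecMulVec c w) = det M * (1 - w ⬝ᵥ u) := by
  have hfac : M - vecMulVec c w = M * (1 + replicateCol Unit (-u) * replicateRow Unit w) := by
    rw [← vecMulVec_eq, neg_vecMulVec, Matrix.mul_add, Matrix.mul_one, Matrix.mul_neg,
      mul_vecMulVec, h, sub_eq_add_neg]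
  rw [hfac, det_mul, det_one_add_replicateCol_mul_replicateRow, dotProduct_neg, sub_eq_add_neg]

variable {K : Type*} [Field K] [Fintype κ] [DecidableEq κ]

theorem det_fromBlocks_smul_one (B : Matrix ι κ K) (C : Matrix κ ι K) (α : K) {β : K}
    (hβ : β ≠ 0) :
    β ^ Fintype.card ι * det (fromBlocks (α • 1) B C (β • 1))
      = β ^ Fintype.card κ * det ((α * β) • 1 - B * C) := by
  let _ : Invertible (β • (1 : Matrix κ κ K)) :=
    ⟨β⁻¹ • 1, by simp [smul_smul, hβ], by simp [smul_smul, hβ]⟩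
  rw [det_fromBlocks₂₂, det_smul, det_one, mul_one, mul_left_comm, ← det_smul]
  congr 2
  show β • (α • 1 - B * (β⁻¹ • 1) * C) = (α * β) • 1 - B * C
  rw [smul_sub, smul_smul, Matrix.mul_smul, Matrix.mul_one, Matrix.smul_mul, smul_smul,
    mul_inv_cancel₀ hβ, one_smul, mul_comm]

theorem det_fromBlocks_smul_one_sub_vecMulVec_one (B : Matrix ι κ K) (C : Matrix κ ι K)
    {a b α β : K} (hB : B *ᵥ 1 = a • 1) (hC : C *ᵥ 1 = b • 1) (hβ : β ≠ 0)
    (hδ : α * β - a * b ≠ 0) :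
    (α * β - a * b) * β ^ Fintype.card ι * det (fromBlocks (α • 1) B C (β • 1) - vecMulVec 1 1)
      = β ^ Fintype.card κ * det ((α * β) • 1 - B * C)
        * (α * β - a * b - Fintype.card ι * (β - a) - Fintype.card κ * (α - b)) := by
  set δ := α * β - a * b
  set u : ι ⊕ κ → K := Sum.elim (((β - a) / δ) • 1) (((α - b) / δ) • 1)
  have hu : fromBlocks (α • 1) B C (β • 1) *ᵥ u = 1 := by
    simp only [u, fromBlocks_mulVec, Sum.elim_comp_inl, Sum.elim_comp_inr, smul_mulVec,
      mulVec_smul, one_mulVec, hB, hC]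
    ext (i | k) <;>
      simp only [Sum.elim_inl, Sum.elim_inr, Pi.add_apply, Pi.smul_apply, Pi.one_apply, smul_eq_mul,
        mul_one] <;>
      field_simp <;> ring
  have hdot : 1 ⬝ᵥ u = (Fintype.card ι * (β - a) + Fintype.card κ * (α - b)) / δ := by
    simp [u, one_dotProduct, Fintype.sum_sum_type, mul_div_assoc, add_div]
  rw [det_sub_vecMulVec_of_mulVec_eq hu, ← det_fromBlocks_smul_one B C α hβ, hdot]
  field_simp
  ring

end Matrix

theorem Fin.prod_univ_eq_prod_castLE_mul {M : Type*} [CommMonoid M] {n : ℕ} (hn : 0 < n)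
    (f : Fin n → M) :
    ∏ i, f i = (∏ i : Fin (n - 1), f (Fin.castLE (Nat.sub_le n 1) i)) * f ⟨n - 1, by omega⟩ := by
  obtain ⟨k, rfl⟩ : ∃ k, n = k + 1 := ⟨n - 1, by omega⟩
  exact Fin.prod_univ_castSucc f

theorem Polynomial.eq_of_eqOn_Ici {f g : ℝ → ℝ} (p q : ℝ[X]) (hp : ∀ x, p.eval x = f x)
    (hq : ∀ x, q.eval x = g x) (a : ℝ) (h : Set.EqOn f g (Set.Ici a)) : f = g := by
  have hpq : p = q := eq_of_infinite_eval_eq p q <|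
    (Set.Ici_infinite a).mono fun x hx => by simp [hp, hq, h hx]
  funext x
  rw [← hp, ← hq, hpq]

theorem fQ_eq_eval_charpoly {W : Type*} [Fintype W] (H : SimpleGraph W) (lam : ℝ) :
    fQ H lam = (signlessLaplacian H).charpoly.eval lam := by
  rw [eval_charpoly, scalar_apply, ← smul_one_eq_diagonal, fQ]

namespace SimpleGraph

variable {W : Type*} [Fintype W]

theorem signlessLaplacian_eq_diagonal_add_adjMatrix (H : SimpleGraph W) :
    signlessLaplacian H = diagonal (H.adjMatrix ℝ *ᵥ 1) + H.adjMatrix ℝ := by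
  ext i j
  by_cases h : i = j <;> simp [signlessLaplacian, diagonal, h]

theorem smul_one_sub_signlessLaplacian_compl (H : SimpleGraph W) (lam : ℝ) :
    lam • 1 - signlessLaplacian Hᶜ
      = (lam - Fintype.card W + 2) • 1 + signlessLaplacian H - vecMulVec 1 1 := by
  ext i j
  by_cases h : i = j
  · subst h
    have hlt := H.degree_lt_card_verts i
    simp only [signlessLaplacian, degree_compl, Nat.sub_sub, compl_adj, ne_eq, Matrix.sub_apply,
      Matrix.add_apply, Matrix.smul_apply, one_apply_eq, smul_eq_mul, mul_one, of_apply, ↓reduceIte,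
      Nat.cast_sub (show 1 + H.degree i ≤ Fintype.card W by omega), Nat.cast_add, Nat.cast_one,
      not_true_eq_false, SimpleGraph.irrefl, not_false_eq_true, and_true, add_zero, vecMulVec_one,
      replicateCol_apply, Pi.one_apply]
    ring
  · by_cases hadj : H.Adj i j <;> simp [signlessLaplacian, h, hadj]

variable {V : Type*} (G : SimpleGraph V)

noncomputable def edgeIncMatrix (R : Type*) [Zero R] [One R] : Matrix V G.edgeSet R :=
  (G.incMatrix R).submatrix id (↑)

theorem edgeIncMatrix_transpose_mulVec_one [Fintype V] (R : Type*) [NonAssocSemiring R] :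
    (G.edgeIncMatrix R)ᵀ *ᵥ 1 = 2 := by
  ext e
  simpa [mulVec, dotProduct, edgeIncMatrix] using G.sum_incMatrix_apply_of_mem_edgeSet e.2

variable {G} [Fintype G.edgeSet]

theorem sum_edgeSet_eq_sum {M : Type*} [AddCommMonoid M] [Fintype V] {f : Sym2 V → M}
    (hf : ∀ e ∉ G.edgeSet, f e = 0) : ∑ e : G.edgeSet, f e = ∑ e, f e := by
  rw [← Finset.sum_subtype G.edgeFinset (fun e => mem_edgeFinset)]
  exact Finset.sum_subset (Finset.subset_univ _) fun e _ he => hf e (by simpa using he)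

variable (G) [Fintype V]

theorem edgeIncMatrix_mulVec_one (R : Type*) [NonAssocSemiring R] :
    G.edgeIncMatrix R *ᵥ 1 = fun v => (G.degree v : R) := by
  ext v
  rw [← sum_incMatrix_apply, ← sum_edgeSet_eq_sum (f := G.incMatrix R v)
    fun e he => G.incMatrix_of_notMem_incidenceSet fun h => he h.1]
  simp [mulVec, dotProduct, edgeIncMatrix]

theorem edgeIncMatrix_mul_transpose :
    G.edgeIncMatrix ℝ * (G.edgeIncMatrix ℝ)ᵀ = signlessLaplacian G := by
  ext u v
  have h := congrFun₂ (G.incMatrix_mul_transpose (R := ℝ)) u v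
  rw [Matrix.mul_apply, ← sum_edgeSet_eq_sum (G := G)
    (f := fun e => G.incMatrix ℝ u e * (G.incMatrix ℝ)ᵀ e v)
    fun e he => by simp [G.incMatrix_of_notMem_incidenceSet fun h => he h.1]] at h
  simp only [Matrix.mul_apply, edgeIncMatrix, submatrix_apply, id, transpose_apply] at h ⊢
  rw [h]
  simp only [signlessLaplacian, of_apply]
  split_ifs <;> simp_all

variable {G}

theorem IsRegularOfDegree.card_mul_eq_two_mul_card_edgeSet {r : ℕ}
    (hreg : G.IsRegularOfDegree r) : Fintype.card V * r = 2 * Fintype.card G.edgeSet := by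
  have h := G.sum_degrees_eq_twice_card_edges
  simp only [hreg.degree_eq, Finset.sum_const, Finset.card_univ, smul_eq_mul, edgeFinset,
    Set.toFinset_card] at h
  convert h

end SimpleGraph

section Transform

open SimpleGraph

variable {V : Type*} (G : SimpleGraph V)

theorem xyzTransform_one_one_minus_eq_compl :
    xyzTransform G .one .one .minus = (xyzTransform G .zero .zero .plus)ᶜ := by
  ext (u | e) (v | f) <;> simp [xyzTransform, XYZ.rel, XYZ.inc]

theorem adjMatrix_xyzTransform_zero_zero_plus :
    (xyzTransform G .zero .zero .plus).adjMatrix ℝ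
      = fromBlocks 0 (G.edgeIncMatrix ℝ) (G.edgeIncMatrix ℝ)ᵀ 0 := by
  ext (u | e) (v | f) <;>
    simp only [adjMatrix_apply] <;>
    simp only [xyzTransform, XYZ.rel, XYZ.inc, ↓reduceIte, edgeIncMatrix,
      transpose_submatrix, fromBlocks_apply₁₁, fromBlocks_apply₁₂, fromBlocks_apply₂₁,
      fromBlocks_apply₂₂, Matrix.zero_apply, submatrix_apply, id_eq, transpose_apply,
      incMatrix_apply', incidenceSet, Set.mem_ofPred_eq, Subtype.coe_prop, true_and] <;>
    congr

variable [Fintype V] [Fintype G.edgeSet] {G}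

theorem signlessLaplacian_xyzTransform_zero_zero_plus {r : ℕ} (hreg : G.IsRegularOfDegree r) :
    signlessLaplacian (xyzTransform G .zero .zero .plus)
      = fromBlocks ((r : ℝ) • 1) (G.edgeIncMatrix ℝ) (G.edgeIncMatrix ℝ)ᵀ ((2 : ℝ) • 1) := by
  rw [signlessLaplacian_eq_diagonal_add_adjMatrix, adjMatrix_xyzTransform_zero_zero_plus]
  have hdeg : (fun v => (G.degree v : ℝ)) = fun _ => (r : ℝ) := funext fun v => by rw [hreg v]
  rw [fromBlocks_mulVec, Pi.one_comp, Pi.one_comp, zero_mulVec, zero_mulVec, zero_add, add_zero,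
    edgeIncMatrix_mulVec_one, edgeIncMatrix_transpose_mulVec_one, hdeg]
  ext (u | e) (v | f) <;> simp [diagonal, one_apply]

theorem fQ_xyzTransform_one_one_minus {r : ℕ} (hreg : G.IsRegularOfDegree r) (lam : ℝ) :
    fQ (xyzTransform G .one .one .minus) lam
      = det (fromBlocks
          ((lam - Fintype.card V - Fintype.card G.edgeSet + r + 2) • 1) (G.edgeIncMatrix ℝ)
          (G.edgeIncMatrix ℝ)ᵀ ((lam - Fintype.card V - Fintype.card G.edgeSet + 4) • 1)
        - vecMulVec 1 1) := by
  rw [fQ, xyzTransform_one_one_minus_eq_compl, smul_one_sub_signlessLaplacian_compl,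
    signlessLaplacian_xyzTransform_zero_zero_plus hreg, Fintype.card_sum]
  congr 2
  ext (u | e) (v | f) <;> 
    simp only [Matrix.add_apply, Matrix.smul_apply, one_apply, Sum.inl.injEq, Sum.inr.injEq,
      reduceCtorEq, ↓reduceIte, smul_eq_mul, mul_ite, mul_one, mul_zero, zero_add, Nat.cast_add,
      fromBlocks_apply₁₁, fromBlocks_apply₁₂, fromBlocks_apply₂₁, fromBlocks_apply₂₂,
      transpose_apply] <;>
    split_ifs <;> ring

theorem mul_fQ_xyzTransform_one_one_minus {r : ℕ} (hreg : G.IsRegularOfDegree r)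
    (hnm : Fintype.card V ≤ Fintype.card G.edgeSet) {lam : ℝ}
    (hlam : Fintype.card V + Fintype.card G.edgeSet ≤ lam) :
    ((lam - Fintype.card V - Fintype.card G.edgeSet + r + 2)
        * (lam - Fintype.card V - Fintype.card G.edgeSet + 4) - 2 * r)
      * fQ (xyzTransform G .one .one .minus) lam
      = ((lam - 2 * Fintype.card V - 2 * Fintype.card G.edgeSet + 2)
            * (lam - Fintype.card V - Fintype.card G.edgeSet + r + 4) + 8 * Fintype.card G.edgeSet)
        * (lam - Fintype.card V - Fintype.card G.edgeSet + 4)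
            ^ (Fintype.card G.edgeSet - Fintype.card V)
        * fQ G ((lam - Fintype.card V - Fintype.card G.edgeSet + r + 2)
            * (lam - Fintype.card V - Fintype.card G.edgeSet + 4)) := by
  set n := Fintype.card V
  set m := Fintype.card G.edgeSet
  set α := lam - n - m + r + 2
  set β := lam - n - m + 4
  have hβ : 0 < β := by linarith
  have hδ : 0 < α * β - r * 2 := by nlinarith
  have hrows : G.edgeIncMatrix ℝ *ᵥ 1 = (r : ℝ) • 1 := by
    rw [edgeIncMatrix_mulVec_one]; ext v; simp [hreg v]
  have hcols : (G.edgeIncMatrix ℝ)ᵀ *ᵥ 1 = (2 : ℝ) • 1 := by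
    rw [edgeIncMatrix_transpose_mulVec_one]; ext; simp
  have hdet := det_fromBlocks_smul_one_sub_vecMulVec_one _ _ hrows hcols hβ.ne' hδ.ne'
  have hpow : β ^ m = β ^ (m - n) * β ^ n := by rw [← pow_add, Nat.sub_add_cancel hnm]
  rw [edgeIncMatrix_mul_transpose, ← fQ, ← fQ_xyzTransform_one_one_minus hreg, hpow] at hdet
  have hnr : (n : ℝ) * r = 2 * m := by exact_mod_cast hreg.card_mul_eq_two_mul_card_edgeSet
  apply mul_left_cancel₀ (pow_pos hβ n).ne'
  linear_combination hdet + (2 * β ^ (m - n) * β ^ n * fQ G (α * β)) * hnr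

end Transform

theorem signless_charpoly_xyz_oom {V : Type*} [Fintype V] (G : SimpleGraph V) (r n m : ℕ)
    (hn : Fintype.card V = n) (hm : Fintype.card G.edgeSet = m)
    (hreg : G.IsRegularOfDegree r) (hr2 : 2 ≤ r) (hn0 : 0 < n)
    (q : Fin n → ℝ)
    (hlast : q ⟨n - 1, by omega⟩ = 2 * r)
    (hq : ∀ x : ℝ, fQ G x = ∏ i : Fin n, (x - q i)) :
    ∀ lam : ℝ,
      fQ (xyzTransform G XYZ.one XYZ.one XYZ.minus) lam =
        ((lam - 2 * n - 2 * m + 2) * (lam - n - m + r + 4) + 8 * m) *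
          (lam - n - m + 4) ^ (m - n) *
          ∏ i : Fin (n - 1), ((lam - m - n + r + 2) * (lam - n - m + 4) - (q (Fin.castLE (Nat.sub_le n 1) i))) := by
  have hnm : Fintype.card V ≤ Fintype.card G.edgeSet := by
    have := hreg.card_mul_eq_two_mul_card_edgeSet; nlinarith
  refine congrFun (Polynomial.eq_of_eqOn_Ici _
    ((((X : ℝ[X]) - 2 * n - 2 * m + 2) * ((X : ℝ[X]) - n - m + r + 4) + 8 * m)
      * ((X : ℝ[X]) - n - m + 4) ^ (m - n)
      * ∏ i : Fin (n - 1), (((X : ℝ[X]) - m - n + r + 2) * ((X : ℝ[X]) - n - m + 4)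
          - C (q (Fin.castLE (Nat.sub_le n 1) i))))
    (fun x => (fQ_eq_eval_charpoly _ x).symm) (fun x => by simp [eval_prod]) (n + m)
    fun lam hlam => ?_)
  rw [Set.mem_Ici, ← hn, ← hm] at hlam
  have hδ : 0 < (lam - n - m + r + 2) * (lam - n - m + 4) - 2 * r := by
    rw [← hn, ← hm]; nlinarith
  have h := mul_fQ_xyzTransform_one_one_minus hreg hnm hlam
  rw [hn, hm] at h
  rw [show lam - m - n = lam - n - m by ring]
  apply mul_left_cancel₀ hδ.ne'
  rw [h, hq, Fin.prod_univ_eq_prod_castLE_mul hn0, hlast]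
  ring
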